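/- Let M ⊂ ℂᴺ be a formal real hypersurface of m-infinite type (m ≥ 1) given in normal coordinates by w = Q(z,χ,τ) with Q(z,χ,τ) = τ + τᵐ Q̃(z,χ,τ). Let H = (F,G) be a formal CR-transversal holomorphic map sending M into itself. Then the identity Q̃(z,χ,0) = G_w(0)^{m−1} · Q̃(F(z,0), F̄(χ,0), 0) holds as formal power series in (z,χ). -/

import Mathlib

noncomputable section
open MvPowerSeries Complex

instance {σ : Type*} : IsDomain (MvPowerSeries σ ℂ) := NoZeroDivisors.to_isDomain _

/-- total degree of a multi-index -/
def deg {σ : Type*} (d : σ →₀ ℕ) : ℕ := d.sum fun _ n => n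

/-- substitution of formal power series (intended for substituted series with
vanishing constant term, in which case each coefficient of the result is the
finite sum below) -/
def pssubst {σ τ : Type*} [Fintype σ] [DecidableEq σ] [Fintype τ] [DecidableEq τ]
    (a : σ → MvPowerSeries τ ℂ) (f : MvPowerSeries σ ℂ) : MvPowerSeries τ ℂ :=
  fun μ => ∑ d ∈ Finset.Iic (Finsupp.equivFunOnFinite.symm fun _ => deg μ),
    MvPowerSeries.coeff (R := ℂ) d f * MvPowerSeries.coeff (R := ℂ) μ (∏ i, (a i) ^ (d i))

/-- formal partial derivative ∂/∂X i -/
def pd {σ : Type*} [DecidableEq σ] (i : σ) (f : MvPowerSeries σ ℂ) : MvPowerSeries σ ℂ :=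
  fun d => ((d i : ℂ) + 1) * MvPowerSeries.coeff (R := ℂ) (d + Finsupp.single i 1) f

/-- the series with complex-conjugated coefficients -/
def psconj {σ : Type*} (f : MvPowerSeries σ ℂ) : MvPowerSeries σ ℂ :=
  MvPowerSeries.map (σ := σ) (starRingEnd ℂ) f

/-- variables (z, w) of source/target space -/
abbrev Wv (n : ℕ) : Type := Fin n ⊕ Unit
/-- variables (z, χ, τ) for complexified defining equations -/
abbrev Vv (n : ℕ) : Type := Fin n ⊕ (Fin n ⊕ Unit)
/-- the variable τ -/
def tv (n : ℕ) : Vv n := Sum.inr (Sum.inr ())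

/-- substitution (z, w) ↦ (z, Q(z,χ,τ)) -/
def sLHS {n : ℕ} (Q : MvPowerSeries (Vv n) ℂ) : Wv n → MvPowerSeries (Vv n) ℂ
  | Sum.inl i => MvPowerSeries.X (Sum.inl i)
  | Sum.inr _ => Q

/-- substitution (z, w) ↦ (χ, τ) -/
def sBar {n : ℕ} : Wv n → MvPowerSeries (Vv n) ℂ
  | Sum.inl i => MvPowerSeries.X (Sum.inr (Sum.inl i))
  | Sum.inr _ => MvPowerSeries.X (Sum.inr (Sum.inr ()))

/-- the formal map H = (F, G) sends M = {w = Q(z,χ,τ)} into M' = {w' = Q'(z',χ',τ')}: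
G(z,Q(z,χ,τ)) = Q'(F(z,Q(z,χ,τ)), F̄(χ,τ), Ḡ(χ,τ)) -/
def SendsInto {n : ℕ} (Q Q' : MvPowerSeries (Vv n) ℂ)
    (F : Fin n → MvPowerSeries (Wv n) ℂ) (G : MvPowerSeries (Wv n) ℂ) : Prop :=
  pssubst (sLHS Q) G =
    pssubst (fun v => match v with
      | Sum.inl i => pssubst (sLHS Q) (F i)
      | Sum.inr (Sum.inl i) => pssubst sBar (psconj (F i))
      | Sum.inr (Sum.inr _) => pssubst sBar (psconj G)) Q'

/-- substitution (z,χ,τ) ↦ (z,χ,0) -/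
def sTau0 {n : ℕ} : Vv n → MvPowerSeries (Vv n) ℂ
  | Sum.inl i => MvPowerSeries.X (Sum.inl i)
  | Sum.inr (Sum.inl i) => MvPowerSeries.X (Sum.inr (Sum.inl i))
  | Sum.inr (Sum.inr _) => 0

/-- substitution (z,w) ↦ (z,0) -/
def sZ0 {n : ℕ} : Wv n → MvPowerSeries (Vv n) ℂ
  | Sum.inl i => MvPowerSeries.X (Sum.inl i)
  | Sum.inr _ => 0

/-- substitution (z,w) ↦ (χ,0) -/
def sChi0 {n : ℕ} : Wv n → MvPowerSeries (Vv n) ℂ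
  | Sum.inl i => MvPowerSeries.X (Sum.inr (Sum.inl i))
  | Sum.inr _ => 0


/-
Put τ = 0 and then z = 0 in the mapping equation G(z,Q) = Q(F(z,Q), F̄(χ,τ), Ḡ(χ,τ)): since
Q̃ vanishes at z = 0 this gives Ḡ(χ,0) = 0, hence G(z,0) = 0 and G = w G̃. Dividing the mapping
equation by τ then gives, with A = G̃(z,Q) and B = conj G̃(χ,τ),

  A - B = τ^(m-1) (B^m Q̃(F(z,Q), F̄(χ,τ), Ḡ(χ,τ)) - Q̃ A).

Putting χ = τ = 0, resp. z = τ = 0, shows that A and B both reduce to the real constant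
g = G̃(0) = G_w(0) at τ = 0. At τ = 0 the bracket becomes g^m Q̃(F(z,0), F̄(χ,0), 0) - g Q̃(z,χ,0),
which vanishes at z = 0 and at χ = 0. Its monomials that contain both z and χ are coefficients of
τ^(m-1) in A - B, and these vanish: B contains no z and, modulo τ^m, A ≡ G̃(z,τ) contains no χ.
So the bracket is zero, and dividing by g ≠ 0 gives the claim.

Substitutions are carried out with Mathlib's `MvPowerSeries.subst`, which agrees with `pssubst`
when the substituted series have no constant term.
-/

namespace MvPowerSeries

variable {σ τ R : Type*} [CommRing R]

lemma coeff_prod_pow_eq_zero_of_degree_lt [Fintype σ] {a : σ → MvPowerSeries τ R}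
    (ha : ∀ i, constantCoeff (a i) = 0) {d : σ →₀ ℕ} {μ : τ →₀ ℕ} (h : μ.degree < d.degree) :
    coeff μ (∏ i, a i ^ d i) = 0 := by
  refine coeff_of_lt_order (lt_of_lt_of_le ?_ (le_order_prod _ _))
  calc (μ.degree : ℕ∞) < d.degree := by exact_mod_cast h
    _ = ∑ i, (d i : ℕ∞) := by rw [Finsupp.degree_eq_sum]; push_cast; rfl
    _ ≤ ∑ i, (a i ^ d i).order :=
      Finset.sum_le_sum fun i _ => le_order_pow_of_constantCoeff_eq_zero _ (ha i)

@[simp] lemma subst_zero_right (a : σ → MvPowerSeries τ R) :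
    subst a (0 : MvPowerSeries σ R) = 0 := by
  simpa using subst_C (a := a) (0 : R)

lemma hasSubst_comp {υ : Type*} {a : σ → MvPowerSeries τ R} {b : τ → MvPowerSeries υ R}
    (ha : HasSubst a) (hb : HasSubst b) : HasSubst fun i => subst b (a i) := by
  simpa using ha.comp hb

lemma X_ne_zero [Nontrivial R] (s : σ) : (X s : MvPowerSeries σ R) ≠ 0 := by
  classical
  intro h
  simpa using congrArg (coeff (Finsupp.single s 1)) h

lemma X_pow_dvd_subst_sub_subst {a b : σ → MvPowerSeries τ R} (ha : HasSubst a)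
    (hb : HasSubst b) {j : τ} {k : ℕ} (hab : ∀ i, X j ^ k ∣ a i - b i) (f : MvPowerSeries σ R) :
    X j ^ k ∣ subst a f - subst b f := by
  classical
  have hmod : ∀ i, Ideal.Quotient.mk (Ideal.span {X j ^ k}) (a i) =
      Ideal.Quotient.mk (Ideal.span {X j ^ k}) (b i) := fun i =>
    Ideal.Quotient.eq.mpr (Ideal.mem_span_singleton.mpr (hab i))
  refine X_pow_dvd_iff.mpr fun μ hμ => ?_
  rw [map_sub, coeff_subst ha, coeff_subst hb,
    ← finsum_sub_distrib (coeff_subst_finite ha f μ) (coeff_subst_finite hb f μ)]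
  refine finsum_eq_zero_of_forall_eq_zero fun d => ?_
  have hd : X j ^ k ∣ (d.prod fun i e => a i ^ e) - d.prod fun i e => b i ^ e := by
    refine Ideal.mem_span_singleton.mp (Ideal.Quotient.eq.mp ?_)
    simp only [Finsupp.prod, map_prod, map_pow, hmod]
  rw [← smul_sub, ← map_sub, X_pow_dvd_iff.mp hd μ hμ, smul_zero]

open scoped Classical in
def killVars (s : Set σ) (i : σ) : MvPowerSeries σ R := if i ∈ s then 0 else X i

variable {s t : Set σ}

@[simp] lemma killVars_of_mem {i : σ} (h : i ∈ s) : killVars (R := R) s i = 0 := by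
  simp [killVars, h]

@[simp] lemma killVars_of_notMem {i : σ} (h : i ∉ s) : killVars (R := R) s i = X i := by
  simp [killVars, h]

open scoped Classical in
lemma killVars_eq_smul_X :
    killVars (R := R) s = (fun i => if i ∈ s then (0 : R) else 1) • X := by
  funext i
  by_cases h : i ∈ s <;> simp [h]

lemma hasSubst_killVars : HasSubst (killVars (R := R) s) := by
  classical
  rw [killVars_eq_smul_X]
  exact HasSubst.smul_X _

open scoped Classical in
lemma coeff_subst_killVars (f : MvPowerSeries σ R) (μ : σ →₀ ℕ) :
    coeff μ (subst (killVars s) f) = if ∀ i ∈ s, μ i = 0 then coeff μ f else 0 := by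
  rw [killVars_eq_smul_X, ← rescale_eq_subst, coeff_rescale, Finsupp.prod]
  split_ifs with h
  · rw [Finset.prod_eq_one fun i hi => ?_, one_mul]
    have hs : i ∉ s := fun hs => Finsupp.mem_support_iff.mp hi (h i hs)
    simp [hs]
  · push Not at h
    obtain ⟨i, hs, hi⟩ := h
    rw [Finset.prod_eq_zero (Finsupp.mem_support_iff.mpr hi) (by simp [hs, hi]), zero_mul]

lemma subst_killVars_subst_killVars (f : MvPowerSeries σ R) :
    subst (killVars (R := R) s) (subst (killVars (R := R) t) f) =
      subst (killVars (s ∪ t)) f := by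
  classical
  rw [subst_comp_subst_apply (R := R) hasSubst_killVars hasSubst_killVars]
  congr 1
  funext i
  by_cases ht : i ∈ t
  · simp [ht]
  · by_cases hs : i ∈ s <;> simp [ht, hs, subst_X hasSubst_killVars]

lemma subst_eq_zero_of_subst_killVars_eq_zero {b : σ → MvPowerSeries τ R} (hb : HasSubst b)
    (hbs : ∀ i ∈ s, b i = 0) {f : MvPowerSeries σ R}
    (hf : subst (killVars (R := R) s) f = 0) : subst b f = 0 := by
  classical
  have hb' : b = fun i => subst b (killVars (R := R) s i) := by
    funext i
    by_cases hi : i ∈ s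
    · simp [hi, hbs i hi]
    · simp [hi, subst_X hb]
  rw [hb', ← subst_comp_subst_apply hasSubst_killVars hb, hf, subst_zero_right]

lemma subst_killVars_eq_zero_of_subset (hst : s ⊆ t) {f : MvPowerSeries σ R}
    (hf : subst (killVars (R := R) s) f = 0) : subst (killVars (R := R) t) f = 0 :=
  subst_eq_zero_of_subst_killVars_eq_zero hasSubst_killVars (fun i hi => by simp [hst hi]) hf

lemma subst_killVars_eq_zero {f : MvPowerSeries σ R}
    (hf : ∀ μ : σ →₀ ℕ, (∀ i ∈ s, μ i = 0) → coeff μ f = 0) :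
    subst (killVars (R := R) s) f = 0 := by
  classical
  ext μ
  rw [coeff_subst_killVars]
  split_ifs with h
  · simpa using hf μ h
  · simp

lemma coeff_eq_zero_of_subst_killVars_eq_self {f : MvPowerSeries σ R}
    (hf : subst (killVars s) f = f) {μ : σ →₀ ℕ} {i : σ} (hi : i ∈ s) (hμ : μ i ≠ 0) :
    coeff μ f = 0 := by
  classical
  rw [← hf, coeff_subst_killVars, if_neg fun h => hμ (h i hi)]

lemma eq_zero_of_subst_killVars_eq_zero {f : MvPowerSeries σ R}
    (hs : subst (killVars (R := R) s) f = 0) (ht : subst (killVars (R := R) t) f = 0)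
    (hst : ∀ μ : σ →₀ ℕ, ∀ i ∈ s, μ i ≠ 0 → ∀ j ∈ t, μ j ≠ 0 → coeff μ f = 0) : f = 0 := by
  classical
  ext μ
  by_cases hμs : ∀ i ∈ s, μ i = 0
  · simpa [coeff_subst_killVars, if_pos hμs] using congrArg (coeff μ) hs
  by_cases hμt : ∀ j ∈ t, μ j = 0
  · simpa [coeff_subst_killVars, if_pos hμt] using congrArg (coeff μ) ht
  push Not at hμs hμt
  obtain ⟨i, hi, hμi⟩ := hμs
  obtain ⟨j, hj, hμj⟩ := hμt
  simpa using hst μ i hi hμi j hj hμj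

lemma X_dvd_of_subst_killVars_eq_zero {i : σ} {f : MvPowerSeries σ R}
    (hf : subst (killVars (R := R) {i}) f = 0) : X i ∣ f := by
  classical
  refine X_dvd_iff.mpr fun μ hμ => ?_
  simpa [coeff_subst_killVars, hμ] using congrArg (coeff μ) hf

end MvPowerSeries

lemma pssubst_eq_subst {σ τ : Type*} [Fintype σ] [DecidableEq σ] [Fintype τ] [DecidableEq τ]
    {a : σ → MvPowerSeries τ ℂ} (ha : ∀ i, constantCoeff (a i) = 0) (f : MvPowerSeries σ ℂ) :
    pssubst a f = subst a f := by
  ext μ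
  rw [coeff_subst (hasSubst_of_constantCoeff_zero ha)]
  simp only [smul_eq_mul, Finsupp.prod_fintype _ _ (fun _ => pow_zero _)]
  refine (finsum_eq_sum_of_support_subset _ fun d hd => ?_).symm
  have hle : d.degree ≤ μ.degree := by
    by_contra hlt
    exact hd (by simp [coeff_prod_pow_eq_zero_of_degree_lt ha (not_le.mp hlt)])
  simpa [Finset.mem_Iic, Finsupp.le_def] using
    fun i => ((d.le_degree i).trans hle : d i ≤ deg μ)

lemma constantCoeff_psconj {σ : Type*} (f : MvPowerSeries σ ℂ) :
    constantCoeff (psconj f) = starRingEnd ℂ (constantCoeff f) :=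
  constantCoeff_map _ _

section Hypersurface

variable {n m : ℕ} {Qt : MvPowerSeries (Vv n) ℂ} {F : Fin n → MvPowerSeries (Wv n) ℂ}
  {G Gt : MvPowerSeries (Wv n) ℂ} {b : Vv n → MvPowerSeries (Vv n) ℂ}

def zVars (n : ℕ) : Set (Vv n) := Set.range Sum.inl

def chiVars (n : ℕ) : Set (Vv n) := Set.range fun i => Sum.inr (Sum.inl i)

def normalQ (m : ℕ) (Qt : MvPowerSeries (Vv n) ℂ) : MvPowerSeries (Vv n) ℂ :=
  X (tv n) + X (tv n) ^ m * Qt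

-- `(F(z,Q), F̄(χ,τ), Ḡ(χ,τ))`, the map substituted into the target equation in `SendsInto`
def targetMap (Q : MvPowerSeries (Vv n) ℂ) (F : Fin n → MvPowerSeries (Wv n) ℂ)
    (G : MvPowerSeries (Wv n) ℂ) : Vv n → MvPowerSeries (Vv n) ℂ
  | Sum.inl i => subst (sLHS Q) (F i)
  | Sum.inr (Sum.inl i) => subst sBar (psconj (F i))
  | Sum.inr (Sum.inr _) => subst sBar (psconj G)

-- `(F(z,0), F̄(χ,0), 0)`
def targetMap0 (F : Fin n → MvPowerSeries (Wv n) ℂ) : Vv n → MvPowerSeries (Vv n) ℂ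
  | Sum.inl i => subst sZ0 (F i)
  | Sum.inr (Sum.inl i) => subst sChi0 (psconj (F i))
  | Sum.inr (Sum.inr _) => 0

lemma sTau0_eq_killVars : (sTau0 : Vv n → MvPowerSeries (Vv n) ℂ) = killVars {tv n} := by
  funext v
  rcases v with i | i | u <;> simp [sTau0, tv]

lemma constantCoeff_normalQ (hm : m ≠ 0) (Qt : MvPowerSeries (Vv n) ℂ) :
    constantCoeff (normalQ m Qt) = 0 := by
  simp [normalQ, hm]

lemma constantCoeff_sLHS {Q : MvPowerSeries (Vv n) ℂ} (hQ : constantCoeff Q = 0) (w : Wv n) :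
    constantCoeff (sLHS Q w) = 0 := by
  rcases w with i | u <;> simp [sLHS, hQ]

lemma constantCoeff_sBar (w : Wv n) : constantCoeff (sBar w : MvPowerSeries (Vv n) ℂ) = 0 := by
  rcases w with i | u <;> simp [sBar]

lemma constantCoeff_sZ0 (w : Wv n) : constantCoeff (sZ0 w : MvPowerSeries (Vv n) ℂ) = 0 := by
  rcases w with i | u <;> simp [sZ0]

lemma constantCoeff_sChi0 (w : Wv n) : constantCoeff (sChi0 w : MvPowerSeries (Vv n) ℂ) = 0 := by
  rcases w with i | u <;> simp [sChi0]

lemma constantCoeff_sTau0 (v : Vv n) : constantCoeff (sTau0 v : MvPowerSeries (Vv n) ℂ) = 0 := by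
  rcases v with i | i | u <;> simp [sTau0]

lemma hasSubst_sLHS {Q : MvPowerSeries (Vv n) ℂ} (hQ : constantCoeff Q = 0) :
    HasSubst (sLHS Q) :=
  hasSubst_of_constantCoeff_zero (constantCoeff_sLHS hQ)

lemma hasSubst_sBar : HasSubst (sBar : Wv n → MvPowerSeries (Vv n) ℂ) :=
  hasSubst_of_constantCoeff_zero constantCoeff_sBar

lemma hasSubst_sZ0 : HasSubst (sZ0 : Wv n → MvPowerSeries (Vv n) ℂ) :=
  hasSubst_of_constantCoeff_zero constantCoeff_sZ0

lemma hasSubst_sChi0 : HasSubst (sChi0 : Wv n → MvPowerSeries (Vv n) ℂ) :=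
  hasSubst_of_constantCoeff_zero constantCoeff_sChi0

lemma constantCoeff_targetMap {Q : MvPowerSeries (Vv n) ℂ} (hQ : constantCoeff Q = 0)
    (hF0 : ∀ i, constantCoeff (F i) = 0) (hG0 : constantCoeff G = 0) (v : Vv n) :
    constantCoeff (targetMap Q F G v) = 0 := by
  rcases v with i | i | u
  · exact constantCoeff_subst_eq_zero (hasSubst_sLHS hQ) (constantCoeff_sLHS hQ) (hF0 i)
  · exact constantCoeff_subst_eq_zero hasSubst_sBar constantCoeff_sBar
      (by simp [constantCoeff_psconj, hF0 i])
  · exact constantCoeff_subst_eq_zero hasSubst_sBar constantCoeff_sBar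
      (by simp [constantCoeff_psconj, hG0])

lemma constantCoeff_targetMap0 (hF0 : ∀ i, constantCoeff (F i) = 0) (v : Vv n) :
    constantCoeff (targetMap0 F v) = 0 := by
  rcases v with i | i | u
  · exact constantCoeff_subst_eq_zero hasSubst_sZ0 constantCoeff_sZ0 (hF0 i)
  · exact constantCoeff_subst_eq_zero hasSubst_sChi0 constantCoeff_sChi0
      (by simp [constantCoeff_psconj, hF0 i])
  · simp [targetMap0]

lemma subst_normalQ_eq_zero (hb : HasSubst b) (hbτ : b (tv n) = 0) (hm : m ≠ 0) :
    subst b (normalQ m Qt) = 0 := by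
  simp [normalQ, subst_add hb, subst_mul hb, subst_pow hb, subst_X hb, hbτ, hm]

lemma subst_subst_sLHS_eq_subst_sZ0 (hb : HasSubst b) (hz : ∀ i, b (Sum.inl i) = X (Sum.inl i))
    (hbτ : b (tv n) = 0) (hm : m ≠ 0) (H : MvPowerSeries (Wv n) ℂ) :
    subst b (subst (sLHS (normalQ m Qt)) H) = subst sZ0 H := by
  rw [subst_comp_subst_apply (hasSubst_sLHS (constantCoeff_normalQ hm Qt)) hb]
  congr 1
  funext w
  rcases w with i | u
  · simp [sLHS, sZ0, subst_X hb, hz]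
  · exact subst_normalQ_eq_zero hb hbτ hm

lemma subst_subst_sLHS_eq_C (hb : HasSubst b) (hz : ∀ i, b (Sum.inl i) = 0)
    (hbτ : b (tv n) = 0) (hm : m ≠ 0) (H : MvPowerSeries (Wv n) ℂ) :
    subst b (subst (sLHS (normalQ m Qt)) H) = C (constantCoeff H) := by
  rw [subst_comp_subst_apply (hasSubst_sLHS (constantCoeff_normalQ hm Qt)) hb]
  convert subst_zero_eq_C_constantCoeff (f := H) (S := ℂ) using 2
  · funext w
    rcases w with i | u
    · simp [sLHS, subst_X hb, hz]
    · exact subst_normalQ_eq_zero hb hbτ hm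
  · simp

lemma subst_subst_sBar_eq_subst_sChi0 (hb : HasSubst b)
    (hχ : ∀ i, b (Sum.inr (Sum.inl i)) = X (Sum.inr (Sum.inl i))) (hbτ : b (tv n) = 0)
    (H : MvPowerSeries (Wv n) ℂ) : subst b (subst sBar H) = subst sChi0 H := by
  rw [subst_comp_subst_apply hasSubst_sBar hb]
  congr 1
  funext w
  rcases w with i | u
  · simp [sBar, sChi0, subst_X hb, hχ]
  · exact (subst_X hb (tv n)).trans hbτ

lemma subst_subst_sBar_eq_C (hb : HasSubst b) (hχ : ∀ i, b (Sum.inr (Sum.inl i)) = 0)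
    (hbτ : b (tv n) = 0) (H : MvPowerSeries (Wv n) ℂ) :
    subst b (subst sBar H) = C (constantCoeff H) := by
  rw [subst_comp_subst_apply hasSubst_sBar hb]
  convert subst_zero_eq_C_constantCoeff (f := H) (S := ℂ) using 2
  · funext w
    rcases w with i | u
    · simp [sBar, subst_X hb, hχ]
    · exact (subst_X hb (tv n)).trans hbτ
  · simp

lemma subst_subst_sZ0_eq_C (hb : HasSubst b) (hz : ∀ i, b (Sum.inl i) = 0)
    (H : MvPowerSeries (Wv n) ℂ) : subst b (subst sZ0 H) = C (constantCoeff H) := by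
  rw [subst_comp_subst_apply hasSubst_sZ0 hb]
  convert subst_zero_eq_C_constantCoeff (f := H) (S := ℂ) using 2
  · funext w
    rcases w with i | u <;> simp [sZ0, subst_X hb, hz]
  · simp

lemma subst_subst_sChi0_eq_C (hb : HasSubst b) (hχ : ∀ i, b (Sum.inr (Sum.inl i)) = 0)
    (H : MvPowerSeries (Wv n) ℂ) : subst b (subst sChi0 H) = C (constantCoeff H) := by
  rw [subst_comp_subst_apply hasSubst_sChi0 hb]
  convert subst_zero_eq_C_constantCoeff (f := H) (S := ℂ) using 2
  · funext w
    rcases w with i | u <;> simp [sChi0, subst_X hb, hχ]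
  · simp

lemma subst_subst_targetMap_eq_zero_of_zVars (hb : HasSubst b) (hz : ∀ i, b (Sum.inl i) = 0)
    (hbτ : b (tv n) = 0) (hm : m ≠ 0) (hF0 : ∀ i, constantCoeff (F i) = 0)
    (hG0 : constantCoeff G = 0) (hQz : subst (killVars (R := ℂ) (zVars n)) Qt = 0) :
    subst b (subst (targetMap (normalQ m Qt) F G) Qt) = 0 := by
  have hΦ := hasSubst_of_constantCoeff_zero
    (constantCoeff_targetMap (constantCoeff_normalQ hm Qt) hF0 hG0)
  rw [subst_comp_subst_apply hΦ hb]
  refine subst_eq_zero_of_subst_killVars_eq_zero (hasSubst_comp hΦ hb) ?_ hQz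
  rintro _ ⟨i, rfl⟩
  simp [targetMap, subst_subst_sLHS_eq_C hb hz hbτ hm, hF0 i]

lemma subst_subst_targetMap_eq_zero_of_chiVars (hb : HasSubst b)
    (hχ : ∀ i, b (Sum.inr (Sum.inl i)) = 0) (hbτ : b (tv n) = 0) (hm : m ≠ 0)
    (hF0 : ∀ i, constantCoeff (F i) = 0) (hG0 : constantCoeff G = 0)
    (hQχ : subst (killVars (R := ℂ) (chiVars n)) Qt = 0) :
    subst b (subst (targetMap (normalQ m Qt) F G) Qt) = 0 := by
  have hΦ := hasSubst_of_constantCoeff_zero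
    (constantCoeff_targetMap (constantCoeff_normalQ hm Qt) hF0 hG0)
  rw [subst_comp_subst_apply hΦ hb]
  refine subst_eq_zero_of_subst_killVars_eq_zero (hasSubst_comp hΦ hb) ?_ hQχ
  rintro _ ⟨i, rfl⟩
  simp [targetMap, subst_subst_sBar_eq_C hb hχ hbτ, constantCoeff_psconj, hF0 i]

lemma subst_subst_targetMap0_eq_zero_of_zVars (hb : HasSubst b) (hz : ∀ i, b (Sum.inl i) = 0)
    (hF0 : ∀ i, constantCoeff (F i) = 0) (hQz : subst (killVars (R := ℂ) (zVars n)) Qt = 0) :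
    subst b (subst (targetMap0 F) Qt) = 0 := by
  have hΦ := hasSubst_of_constantCoeff_zero (constantCoeff_targetMap0 hF0)
  rw [subst_comp_subst_apply hΦ hb]
  refine subst_eq_zero_of_subst_killVars_eq_zero (hasSubst_comp hΦ hb) ?_ hQz
  rintro _ ⟨i, rfl⟩
  simp [targetMap0, subst_subst_sZ0_eq_C hb hz, hF0 i]

lemma subst_subst_targetMap0_eq_zero_of_chiVars (hb : HasSubst b)
    (hχ : ∀ i, b (Sum.inr (Sum.inl i)) = 0) (hF0 : ∀ i, constantCoeff (F i) = 0)
    (hQχ : subst (killVars (R := ℂ) (chiVars n)) Qt = 0) :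
    subst b (subst (targetMap0 F) Qt) = 0 := by
  have hΦ := hasSubst_of_constantCoeff_zero (constantCoeff_targetMap0 hF0)
  rw [subst_comp_subst_apply hΦ hb]
  refine subst_eq_zero_of_subst_killVars_eq_zero (hasSubst_comp hΦ hb) ?_ hQχ
  rintro _ ⟨i, rfl⟩
  simp [targetMap0, subst_subst_sChi0_eq_C hb hχ, constantCoeff_psconj, hF0 i]

lemma X_dvd_of_subst_sZ0_eq_zero (hG : subst sZ0 G = 0) : X (Sum.inr ()) ∣ G := by
  let back : Vv n → MvPowerSeries (Wv n) ℂ := Sum.elim (fun i => X (Sum.inl i)) 0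
  have hback : HasSubst back := hasSubst_of_constantCoeff_zero fun v => by
    rcases v with i | v <;> simp [back]
  refine X_dvd_of_subst_killVars_eq_zero ?_
  rw [← subst_zero_right back, ← hG, subst_comp_subst_apply hasSubst_sZ0 hback]
  congr 1
  funext w
  rcases w with i | u
  · simp [sZ0, subst_X hback, back]
  · simp [sZ0]

-- Modulo τ^m, `A = G̃(z, Q)` equals `G̃(z, τ)`, which has no χ, and `B = conj G̃(χ, τ)` has no z.
lemma coeff_subst_sLHS_sub_subst_sBar_eq_zero (hm : m ≠ 0)
    (hQχ : subst (killVars (R := ℂ) (chiVars n)) Qt = 0) {ν : Vv n →₀ ℕ} {i j : Fin n}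
    (hi : ν (Sum.inl i) ≠ 0) (hj : ν (Sum.inr (Sum.inl j)) ≠ 0) (hν : ν (tv n) < m) :
    coeff ν (subst (sLHS (normalQ m Qt)) Gt - subst sBar (psconj Gt)) = 0 := by
  have hZ := hasSubst_killVars (R := ℂ) (s := zVars n)
  have hC := hasSubst_killVars (R := ℂ) (s := chiVars n)
  have hL := hasSubst_sLHS (constantCoeff_normalQ hm Qt)
  have hB : subst (killVars (zVars n)) (subst sBar (psconj Gt)) = subst sBar (psconj Gt) := by
    rw [subst_comp_subst_apply hasSubst_sBar hZ]
    congr 1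
    funext w
    rcases w with k | u <;> simp only [sBar, subst_X hZ] <;> simp [zVars]
  have hA : subst (killVars (chiVars n)) (subst (sLHS (normalQ m Qt)) Gt) =
      subst (sLHS (X (tv n))) Gt := by
    rw [subst_comp_subst_apply hL hC]
    congr 1
    funext w
    rcases w with k | u
    · simp only [sLHS, subst_X hC]
      simp [chiVars]
    · simp only [sLHS, normalQ, subst_add hC, subst_mul hC, subst_pow hC, subst_X hC, hQχ]
      simp [chiVars, tv]
  have hdvd : X (tv n) ^ m ∣ subst (sLHS (normalQ m Qt)) Gt - subst (sLHS (X (tv n))) Gt := by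
    refine X_pow_dvd_subst_sub_subst hL (hasSubst_sLHS (by simp)) (fun w => ?_) Gt
    rcases w with k | u
    · simp [sLHS]
    · simp [sLHS, normalQ]
  have hAν := X_pow_dvd_iff.mp hdvd ν hν
  rw [map_sub, sub_eq_zero] at hAν
  rw [map_sub, coeff_eq_zero_of_subst_killVars_eq_self hB ⟨i, rfl⟩ hi, sub_zero, hAν, ← hA,
    coeff_subst_killVars, if_neg fun h => hj (h _ ⟨j, rfl⟩)]

end Hypersurface

namespace SendsInto

variable {n m : ℕ} {Qt : MvPowerSeries (Vv n) ℂ} {F : Fin n → MvPowerSeries (Wv n) ℂ}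
  {G Gt : MvPowerSeries (Wv n) ℂ}

lemma subst_sLHS_eq (hmap : SendsInto (normalQ m Qt) (normalQ m Qt) F G) (hm : m ≠ 0)
    (hF0 : ∀ i, constantCoeff (F i) = 0) (hG0 : constantCoeff G = 0) :
    subst (sLHS (normalQ m Qt)) G = subst sBar (psconj G) +
      subst sBar (psconj G) ^ m * subst (targetMap (normalQ m Qt) F G) Qt := by
  have hQ := constantCoeff_normalQ hm Qt
  have hΦ := constantCoeff_targetMap hQ hF0 hG0
  have h := hmap
  unfold SendsInto at h
  rw [← pssubst_eq_subst (constantCoeff_sLHS hQ), h]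
  calc _ = pssubst (targetMap (normalQ m Qt) F G) (normalQ m Qt) := by
        congr 1
        funext v
        rcases v with i | i | u <;>
          simp [targetMap, pssubst_eq_subst (constantCoeff_sLHS hQ),
            pssubst_eq_subst constantCoeff_sBar]
    _ = subst (targetMap (normalQ m Qt) F G) (X (tv n) + X (tv n) ^ m * Qt) :=
        pssubst_eq_subst hΦ _
    _ = _ := by
        have hΦ' := hasSubst_of_constantCoeff_zero hΦ
        rw [subst_add hΦ', subst_mul hΦ', subst_pow hΦ', subst_X hΦ']
        rfl

lemma subst_sChi0_psconj_eq_zero (hmap : SendsInto (normalQ m Qt) (normalQ m Qt) F G)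
    (hm : m ≠ 0) (hF0 : ∀ i, constantCoeff (F i) = 0) (hG0 : constantCoeff G = 0)
    (hQz : subst (killVars (R := ℂ) (zVars n)) Qt = 0) :
    subst sChi0 (psconj G) = 0 := by
  have hY := hasSubst_killVars (R := ℂ) (s := zVars n ∪ {tv n})
  have h := congrArg (subst (killVars (R := ℂ) (zVars n ∪ {tv n}))) (hmap.subst_sLHS_eq hm hF0 hG0)
  rwa [subst_subst_sLHS_eq_C hY (by simp [zVars]) (by simp) hm, hG0, map_zero, subst_add hY,
    subst_mul hY, subst_pow hY, subst_subst_sBar_eq_subst_sChi0 hY (by simp [zVars, tv]) (by simp),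
    subst_subst_targetMap_eq_zero_of_zVars hY (by simp [zVars]) (by simp) hm hF0 hG0 hQz,
    mul_zero, add_zero, eq_comm] at h

lemma subst_sZ0_eq_zero (hmap : SendsInto (normalQ m Qt) (normalQ m Qt) F G) (hm : m ≠ 0)
    (hF0 : ∀ i, constantCoeff (F i) = 0) (hG0 : constantCoeff G = 0)
    (hQz : subst (killVars (R := ℂ) (zVars n)) Qt = 0) :
    subst sZ0 G = 0 := by
  have hE := hasSubst_killVars (R := ℂ) (s := {tv n})
  have h := congrArg (subst (killVars (R := ℂ) {tv n})) (hmap.subst_sLHS_eq hm hF0 hG0)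
  rwa [subst_subst_sLHS_eq_subst_sZ0 hE (by simp [tv]) (by simp) hm, subst_add hE, subst_mul hE,
    subst_pow hE, subst_subst_sBar_eq_subst_sChi0 hE (by simp [tv]) (by simp),
    hmap.subst_sChi0_psconj_eq_zero hm hF0 hG0 hQz, zero_pow hm, zero_mul, add_zero] at h

lemma subst_killVars_tv_subst_targetMap (hmap : SendsInto (normalQ m Qt) (normalQ m Qt) F G)
    (hm : m ≠ 0) (hF0 : ∀ i, constantCoeff (F i) = 0) (hG0 : constantCoeff G = 0)
    (hQz : subst (killVars (R := ℂ) (zVars n)) Qt = 0) :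
    subst (killVars (R := ℂ) {tv n}) (subst (targetMap (normalQ m Qt) F G) Qt) =
      subst (targetMap0 F) Qt := by
  have hE := hasSubst_killVars (R := ℂ) (s := {tv n})
  have hΦ := hasSubst_of_constantCoeff_zero
    (constantCoeff_targetMap (constantCoeff_normalQ hm Qt) hF0 hG0)
  rw [subst_comp_subst_apply hΦ hE]
  congr 1
  funext v
  rcases v with i | i | u
  · exact subst_subst_sLHS_eq_subst_sZ0 hE (by simp [tv]) (by simp) hm (F i)
  · exact subst_subst_sBar_eq_subst_sChi0 hE (by simp [tv]) (by simp) _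
  · exact (subst_subst_sBar_eq_subst_sChi0 hE (by simp [tv]) (by simp) _).trans
      (hmap.subst_sChi0_psconj_eq_zero hm hF0 hG0 hQz)

lemma subst_sLHS_sub_subst_sBar
    (hmap : SendsInto (normalQ m Qt) (normalQ m Qt) F (X (Sum.inr ()) * Gt)) (hm : m ≠ 0)
    (hF0 : ∀ i, constantCoeff (F i) = 0) :
    subst (sLHS (normalQ m Qt)) Gt - subst sBar (psconj Gt) =
      X (tv n) ^ (m - 1) * (subst sBar (psconj Gt) ^ m *
        subst (targetMap (normalQ m Qt) F (X (Sum.inr ()) * Gt)) Qt -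
          Qt * subst (sLHS (normalQ m Qt)) Gt) := by
  have hL := hasSubst_sLHS (constantCoeff_normalQ hm Qt)
  have h := hmap.subst_sLHS_eq hm hF0 (by simp)
  set A := subst (sLHS (normalQ m Qt)) Gt
  set B := subst sBar (psconj Gt)
  set R := subst (targetMap (normalQ m Qt) F (X (Sum.inr ()) * Gt)) Qt
  rw [subst_mul hL, subst_X hL, psconj, map_mul, map_X, subst_mul hasSubst_sBar,
    subst_X hasSubst_sBar] at h
  change (X (tv n) + X (tv n) ^ m * Qt) * A = X (tv n) * B + (X (tv n) * B) ^ m * R at h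
  obtain ⟨k, rfl⟩ : ∃ k, m = k + 1 := ⟨m - 1, by omega⟩
  refine mul_left_cancel₀ (X_ne_zero (tv n)) ?_
  rw [Nat.add_sub_cancel]
  linear_combination h

lemma subst_sZ0_eq_C_and_subst_sChi0_eq_C
    (hmap : SendsInto (normalQ m Qt) (normalQ m Qt) F (X (Sum.inr ()) * Gt)) (hm : m ≠ 0)
    (hF0 : ∀ i, constantCoeff (F i) = 0) (hQz : subst (killVars (R := ℂ) (zVars n)) Qt = 0)
    (hQχ : subst (killVars (R := ℂ) (chiVars n)) Qt = 0) :
    subst sZ0 Gt = C (constantCoeff Gt) ∧ subst sChi0 (psconj Gt) = C (constantCoeff Gt) := by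
  have hkey := hmap.subst_sLHS_sub_subst_sBar hm hF0
  have hG0 : constantCoeff (X (Sum.inr ()) * Gt) = 0 := by simp
  have hY := hasSubst_killVars (R := ℂ) (s := zVars n ∪ {tv n})
  have hZ := hasSubst_killVars (R := ℂ) (s := chiVars n ∪ {tv n})
  have hA := congrArg (subst (killVars (R := ℂ) (chiVars n ∪ {tv n}))) hkey
  rw [subst_sub hZ, subst_subst_sLHS_eq_subst_sZ0 hZ (by simp [chiVars, tv]) (by simp) hm,
    subst_subst_sBar_eq_C hZ (by simp [chiVars]) (by simp), subst_mul hZ, subst_pow hZ,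
    subst_X hZ, subst_sub hZ, subst_mul hZ, subst_mul hZ,
    subst_subst_targetMap_eq_zero_of_chiVars hZ (by simp [chiVars]) (by simp) hm hF0 hG0 hQχ,
    subst_killVars_eq_zero_of_subset Set.subset_union_left hQχ] at hA
  have hB := congrArg (subst (killVars (R := ℂ) (zVars n ∪ {tv n}))) hkey
  rw [subst_sub hY, subst_subst_sLHS_eq_C hY (by simp [zVars]) (by simp) hm,
    subst_subst_sBar_eq_subst_sChi0 hY (by simp [zVars, tv]) (by simp), subst_mul hY,
    subst_pow hY, subst_X hY, subst_sub hY, subst_mul hY, subst_mul hY,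
    subst_subst_targetMap_eq_zero_of_zVars hY (by simp [zVars]) (by simp) hm hF0 hG0 hQz,
    subst_killVars_eq_zero_of_subset Set.subset_union_left hQz] at hB
  simp only [mul_zero, zero_mul, sub_zero, sub_eq_zero, constantCoeff_psconj] at hA hB
  -- `hA` says `G̃(z,0) = conj g`; setting z = 0 in it shows that `g` is real
  have hreal := congrArg (subst (killVars (R := ℂ) (zVars n ∪ {tv n}))) hA
  rw [subst_subst_sZ0_eq_C hY (by simp [zVars]), subst_C] at hreal
  exact ⟨hA.trans hreal.symm, hB.symm⟩

lemma subst_killVars_tv_bracket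
    (hmap : SendsInto (normalQ m Qt) (normalQ m Qt) F (X (Sum.inr ()) * Gt)) (hm : m ≠ 0)
    (hF0 : ∀ i, constantCoeff (F i) = 0) (hQz : subst (killVars (R := ℂ) (zVars n)) Qt = 0)
    (hQχ : subst (killVars (R := ℂ) (chiVars n)) Qt = 0) :
    subst (killVars (R := ℂ) {tv n}) (subst sBar (psconj Gt) ^ m *
        subst (targetMap (normalQ m Qt) F (X (Sum.inr ()) * Gt)) Qt -
          Qt * subst (sLHS (normalQ m Qt)) Gt) =
      C (constantCoeff Gt) ^ m * subst (targetMap0 F) Qt -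
        subst (killVars {tv n}) Qt * C (constantCoeff Gt) := by
  have hE := hasSubst_killVars (R := ℂ) (s := {tv n})
  obtain ⟨hA0, hB0⟩ := hmap.subst_sZ0_eq_C_and_subst_sChi0_eq_C hm hF0 hQz hQχ
  rw [subst_sub hE, subst_mul hE, subst_pow hE, subst_mul hE,
    subst_subst_sBar_eq_subst_sChi0 hE (by simp [tv]) (by simp), hB0,
    hmap.subst_killVars_tv_subst_targetMap hm hF0 (by simp) hQz,
    subst_subst_sLHS_eq_subst_sZ0 hE (by simp [tv]) (by simp) hm, hA0]

-- The left side vanishes at z = 0 and at χ = 0, and its mixed coefficients are coefficients of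
-- τ^(m-1) in `A - B`.
lemma C_pow_mul_sub_eq_zero
    (hmap : SendsInto (normalQ m Qt) (normalQ m Qt) F (X (Sum.inr ()) * Gt)) (hm : m ≠ 0)
    (hF0 : ∀ i, constantCoeff (F i) = 0) (hQz : subst (killVars (R := ℂ) (zVars n)) Qt = 0)
    (hQχ : subst (killVars (R := ℂ) (chiVars n)) Qt = 0) :
    C (constantCoeff Gt) ^ m * subst (targetMap0 F) Qt -
      subst (killVars (R := ℂ) {tv n}) Qt * C (constantCoeff Gt) = 0 := by
  have hZ := hasSubst_killVars (R := ℂ) (s := zVars n)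
  have hC := hasSubst_killVars (R := ℂ) (s := chiVars n)
  refine eq_zero_of_subst_killVars_eq_zero (s := zVars n) (t := chiVars n) ?_ ?_ ?_
  · rw [subst_sub hZ, subst_mul hZ, subst_mul hZ,
      subst_subst_targetMap0_eq_zero_of_zVars hZ (by simp [zVars]) hF0 hQz,
      subst_killVars_subst_killVars, subst_killVars_eq_zero_of_subset Set.subset_union_left hQz]
    simp
  · rw [subst_sub hC, subst_mul hC, subst_mul hC,
      subst_subst_targetMap0_eq_zero_of_chiVars hC (by simp [chiVars]) hF0 hQχ,
      subst_killVars_subst_killVars, subst_killVars_eq_zero_of_subset Set.subset_union_left hQχ]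
    simp
  · rintro μ _ ⟨i, rfl⟩ hi _ ⟨j, rfl⟩ hj
    rw [← hmap.subst_killVars_tv_bracket hm hF0 hQz hQχ, coeff_subst_killVars]
    split_ifs with hτ
    · have h := congrArg (coeff (Finsupp.single (tv n) (m - 1) + μ))
        (hmap.subst_sLHS_sub_subst_sBar hm hF0)
      rw [X_pow_eq, coeff_add_monomial_mul, one_mul,
        coeff_subst_sLHS_sub_subst_sBar_eq_zero hm hQχ (i := i) (j := j)
          (by simpa [tv] using hi) (by simpa [tv] using hj)
          (by simp [hτ (tv n) rfl]; omega)] at h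
      exact h.symm
    · rfl

lemma subst_killVars_tv_eq
    (hmap : SendsInto (normalQ m Qt) (normalQ m Qt) F (X (Sum.inr ()) * Gt)) (hm : m ≠ 0)
    (hF0 : ∀ i, constantCoeff (F i) = 0) (hQz : subst (killVars (R := ℂ) (zVars n)) Qt = 0)
    (hQχ : subst (killVars (R := ℂ) (chiVars n)) Qt = 0) (hg : constantCoeff Gt ≠ 0) :
    subst (killVars (R := ℂ) {tv n}) Qt =
      C (constantCoeff Gt) ^ (m - 1) * subst (targetMap0 F) Qt := by
  have h := hmap.C_pow_mul_sub_eq_zero hm hF0 hQz hQχ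
  have hCg : (C (constantCoeff Gt) : MvPowerSeries (Vv n) ℂ) ≠ 0 :=
    (map_ne_zero_iff _ C_injective).mpr hg
  obtain ⟨k, rfl⟩ : ∃ k, m = k + 1 := ⟨m - 1, by omega⟩
  rw [Nat.add_sub_cancel]
  refine mul_left_cancel₀ hCg ?_
  linear_combination -h

end SendsInto

theorem stmt_7_general (n m : ℕ) (hm : 1 ≤ m)
    (Qt : MvPowerSeries (Vv n) ℂ)
(hQtz0 : ∀ d : Vv n →₀ ℕ, (∀ i, d (Sum.inr (Sum.inl i)) = 0) → MvPowerSeries.coeff (R := ℂ) d Qt = 0)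
    (hQtχ0 : ∀ d : Vv n →₀ ℕ, (∀ i, d (Sum.inl i) = 0) → MvPowerSeries.coeff (R := ℂ) d Qt = 0)
(F : Fin n → MvPowerSeries (Wv n) ℂ) (G : MvPowerSeries (Wv n) ℂ)
    (hF0 : ∀ i, MvPowerSeries.constantCoeff (R := ℂ) (F i) = 0)
    (hG0 : MvPowerSeries.constantCoeff (R := ℂ) G = 0)
    (hmap : SendsInto (MvPowerSeries.X (tv n) + (MvPowerSeries.X (tv n)) ^ m * Qt)
      (MvPowerSeries.X (tv n) + (MvPowerSeries.X (tv n)) ^ m * Qt) F G)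
    (hcr : MvPowerSeries.coeff (R := ℂ) (Finsupp.single (Sum.inr ()) 1) G ≠ 0) :
    pssubst sTau0 Qt =
      (MvPowerSeries.C (σ := Vv n) (R := ℂ) (MvPowerSeries.coeff (R := ℂ) (Finsupp.single (Sum.inr ()) 1) G)) ^ (m - 1) *
        pssubst (fun v => match v with
          | Sum.inl i => pssubst sZ0 (F i)
          | Sum.inr (Sum.inl i) => pssubst sChi0 (psconj (F i))
          | Sum.inr (Sum.inr _) => 0) Qt := by
  have hm0 : m ≠ 0 := by omega
  have hQz : subst (killVars (R := ℂ) (zVars n)) Qt = 0 :=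
    subst_killVars_eq_zero fun μ hμ => hQtχ0 μ fun i => hμ _ ⟨i, rfl⟩
  have hQχ : subst (killVars (R := ℂ) (chiVars n)) Qt = 0 :=
    subst_killVars_eq_zero fun μ hμ => hQtz0 μ fun i => hμ _ ⟨i, rfl⟩
  obtain ⟨Gt, rfl⟩ := X_dvd_of_subst_sZ0_eq_zero (hmap.subst_sZ0_eq_zero hm0 hF0 hG0 hQz)
  have hg : coeff (Finsupp.single (Sum.inr ()) 1) (X (Sum.inr ()) * Gt) = constantCoeff Gt := by
    simpa [X_def] using coeff_add_monomial_mul (Finsupp.single (Sum.inr () : Wv n) 1) 0 Gt (1 : ℂ)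
  rw [hg, pssubst_eq_subst constantCoeff_sTau0, sTau0_eq_killVars,
    hmap.subst_killVars_tv_eq hm0 hF0 hQz hQχ (hg ▸ hcr),
    ← pssubst_eq_subst (constantCoeff_targetMap0 hF0)]
  congr 2
  funext v
  rcases v with i | i | u
  · exact (pssubst_eq_subst constantCoeff_sZ0 _).symm
  · exact (pssubst_eq_subst constantCoeff_sChi0 _).symm
  · rfl

/-- Lemma (basidinft): for a CR-transversal self-map H = (F,G) of an m-infinite type
hypersurface, Q̃(z,χ,0) = G_w(0)^{m-1} · Q̃(F(z,0), F̄(χ,0), 0). -/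
theorem stmt_7 (n m : ℕ) (hm : 1 ≤ m)
    (Qt : MvPowerSeries (Vv n) ℂ)
(hQtz0 : ∀ d : Vv n →₀ ℕ, (∀ i, d (Sum.inr (Sum.inl i)) = 0) → MvPowerSeries.coeff (R := ℂ) d Qt = 0)
    (hQtχ0 : ∀ d : Vv n →₀ ℕ, (∀ i, d (Sum.inl i) = 0) → MvPowerSeries.coeff (R := ℂ) d Qt = 0)
    (hQtnt : ∃ d : Vv n →₀ ℕ, d (tv n) = 0 ∧ MvPowerSeries.coeff (R := ℂ) d Qt ≠ 0)
(F : Fin n → MvPowerSeries (Wv n) ℂ) (G : MvPowerSeries (Wv n) ℂ)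
    (hF0 : ∀ i, MvPowerSeries.constantCoeff (R := ℂ) (F i) = 0)
    (hG0 : MvPowerSeries.constantCoeff (R := ℂ) G = 0)
    (hmap : SendsInto (MvPowerSeries.X (tv n) + (MvPowerSeries.X (tv n)) ^ m * Qt)
      (MvPowerSeries.X (tv n) + (MvPowerSeries.X (tv n)) ^ m * Qt) F G)
    (hcr : MvPowerSeries.coeff (R := ℂ) (Finsupp.single (Sum.inr ()) 1) G ≠ 0) :
    pssubst sTau0 Qt =
      (MvPowerSeries.C (σ := Vv n) (R := ℂ) (MvPowerSeries.coeff (R := ℂ) (Finsupp.single (Sum.inr ()) 1) G)) ^ (m - 1) *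
        pssubst (fun v => match v with
          | Sum.inl i => pssubst sZ0 (F i)
          | Sum.inr (Sum.inl i) => pssubst sChi0 (psconj (F i))
          | Sum.inr (Sum.inr _) => 0) Qt :=
  stmt_7_general n m hm Qt hQtz0 hQtχ0 F G hF0 hG0 hmap hcr
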